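/- arXiv:1903.08676 — 3 statements merged into one kernel-verified Lean document; each statement's English description precedes it below -/
import Mathlib

section
/- Let a, b ∈ ℝ with b ≤ 0, and suppose either a ≤ 0 or a + b ≥ 1 (equivalently a ≥ 1 - b ≥ 1). Then (r,t) ↦ r^a t^b is convex on (0,∞)². -/
/-!
A function lying above a supporting affine function at every point of a convex set is convex.
For `f (r, t) = r ^ a * t ^ b` the tangent plane at `(s, t)` is such a minorant: since
`f (x, y) = f (s, t) * f (x / s, y / t)`, this reduces to the tangent plane at `(1, 1)`,
`1 + a (u - 1) + b (v - 1) ≤ u ^ a * v ^ b`. For `a, b ≤ 0` this is `exp z ≥ 1 + z` at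
`z = a log u + b log v` combined with `log u ≤ u - 1`. For `a ≥ 1 - b`, put `w = u ^ (a / (1 - b))`,
so that `u ^ a * v ^ b = w * (v / w) ^ b`; Bernoulli's inequality for the exponent `b ≤ 0` bounds
this below by `(1 - b) w + b v`, and Bernoulli's inequality for the exponent `a / (1 - b) ≥ 1`
bounds `w` below by `1 + a / (1 - b) * (u - 1)`.
-/

open Real

theorem convexOn_of_forall_exists_add_linearMap_le {𝕜 E β : Type*} [Ring 𝕜] [PartialOrder 𝕜]
    [AddCommGroup E] [Module 𝕜 E] [AddCommGroup β] [PartialOrder β] [IsOrderedAddMonoid β]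
    [Module 𝕜 β] [PosSMulMono 𝕜 β] {s : Set E} {f : E → β} (hs : Convex 𝕜 s)
    (h : ∀ x ∈ s, ∃ g : E →ₗ[𝕜] β, ∀ y ∈ s, f x + g (y - x) ≤ f y) : ConvexOn 𝕜 s f := by
  refine ⟨hs, fun x hx y hy a b ha hb hab => ?_⟩
  obtain ⟨g, hg⟩ := h _ (hs hx hy ha hb hab)
  set z := a • x + b • y
  have hz : a • (x - z) + b • (y - z) = 0 := by
    rw [smul_sub, smul_sub, sub_add_sub_comm, ← add_smul, hab, one_smul, sub_self]
  calc f z = (a + b) • f z + g (a • (x - z) + b • (y - z)) := by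
        rw [hab, one_smul, hz, map_zero, add_zero]
    _ = a • (f z + g (x - z)) + b • (f z + g (y - z)) := by
        rw [map_add, map_smul, map_smul, add_smul, smul_add, smul_add]; abel
    _ ≤ a • f x + b • f y :=
        add_le_add (smul_le_smul_of_nonneg_left (hg x hx) ha)
          (smul_le_smul_of_nonneg_left (hg y hy) hb)

theorem one_add_mul_sub_one_le_rpow_of_nonpos {b x : ℝ} (hb : b ≤ 0) (hx : 0 < x) :
    1 + b * (x - 1) ≤ x ^ b := by
  calc 1 + b * (x - 1) ≤ 1 + b * log x := by
        gcongr 1 + ?_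
        exact mul_le_mul_of_nonpos_left (log_le_sub_one_of_pos hx) hb
    _ ≤ x ^ b := by
        rw [rpow_def_of_pos hx, mul_comm]
        linarith [add_one_le_exp (log x * b)]

theorem one_add_mul_sub_one_add_mul_sub_one_le_rpow_mul_rpow_of_nonpos {a b u v : ℝ}
    (ha : a ≤ 0) (hb : b ≤ 0) (hu : 0 < u) (hv : 0 < v) :
    1 + a * (u - 1) + b * (v - 1) ≤ u ^ a * v ^ b := by
  calc 1 + a * (u - 1) + b * (v - 1) ≤ 1 + a * log u + b * log v := by
        gcongr 1 + ?_ + ?_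
        · exact mul_le_mul_of_nonpos_left (log_le_sub_one_of_pos hu) ha
        · exact mul_le_mul_of_nonpos_left (log_le_sub_one_of_pos hv) hb
    _ ≤ u ^ a * v ^ b := by
        rw [rpow_def_of_pos hu, rpow_def_of_pos hv, ← exp_add]
        linarith [add_one_le_exp (log u * a + log v * b)]

theorem one_add_mul_sub_one_add_mul_sub_one_le_rpow_mul_rpow_of_one_le_add {a b u v : ℝ}
    (hb : b ≤ 0) (hab : 1 ≤ a + b) (hu : 0 < u) (hv : 0 < v) :
    1 + a * (u - 1) + b * (v - 1) ≤ u ^ a * v ^ b := by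
  have hq : 0 < 1 - b := by linarith
  set w := u ^ (a / (1 - b))
  have hw : 0 < w := rpow_pos_of_pos hu _
  have hua : u ^ a = w * w ^ (-b) := by
    rw [← rpow_one_add' hw.le (by linarith), ← rpow_mul hu.le]
    congr 1; field_simp; ring
  calc 1 + a * (u - 1) + b * (v - 1)
      = (1 - b) * (1 + a / (1 - b) * (u - 1)) + b * v := by field_simp; ring
    _ ≤ (1 - b) * w + b * v := by
        gcongr
        have hp : 1 ≤ a / (1 - b) := by rw [one_le_div hq]; linarith
        simpa using one_add_mul_self_le_rpow_one_add (by linarith : -1 ≤ u - 1) hp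
    _ = w * (1 + b * (v / w - 1)) := by field_simp; ring
    _ ≤ w * (v / w) ^ b := by
        gcongr
        exact one_add_mul_sub_one_le_rpow_of_nonpos hb (by positivity)
    _ = u ^ a * v ^ b := by
        rw [hua, div_rpow hv.le hw.le, rpow_neg hw.le]; field_simp

theorem convexOn_rpow_mul_rpow_of_forall_le {a b : ℝ}
    (h : ∀ u v : ℝ, 0 < u → 0 < v → 1 + a * (u - 1) + b * (v - 1) ≤ u ^ a * v ^ b) :
    ConvexOn ℝ (Set.Ioi (0:ℝ) ×ˢ Set.Ioi (0:ℝ)) (fun z : ℝ × ℝ => z.1 ^ a * z.2 ^ b) := by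
  refine convexOn_of_forall_exists_add_linearMap_le ((convex_Ioi 0).prod (convex_Ioi 0)) ?_
  rintro ⟨s, t⟩ ⟨hs, ht⟩
  refine ⟨(s ^ a * t ^ b) • ((a / s) • LinearMap.fst ℝ ℝ ℝ + (b / t) • LinearMap.snd ℝ ℝ ℝ), ?_⟩
  rintro ⟨x, y⟩ ⟨hx, hy⟩
  simp only [Set.mem_Ioi] at hs ht hx hy
  calc s ^ a * t ^ b + _
      = s ^ a * t ^ b * (1 + a * (x / s - 1) + b * (y / t - 1)) := by
        simp only [LinearMap.smul_apply, LinearMap.add_apply, LinearMap.fst_apply,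
          LinearMap.snd_apply, Prod.fst_sub, Prod.snd_sub, smul_eq_mul]
        field_simp
        ring
    _ ≤ s ^ a * t ^ b * ((x / s) ^ a * (y / t) ^ b) := by
        gcongr
        exact h _ _ (div_pos hx hs) (div_pos hy ht)
    _ = x ^ a * y ^ b := by
        rw [div_rpow hx.le hs.le, div_rpow hy.le ht.le]
        field_simp

theorem convexOn_rpow_mul_rpow (a b : ℝ) (hb : b ≤ 0) (hab : a ≤ 0 ∨ 1 ≤ a + b) :
    ConvexOn ℝ (Set.Ioi (0:ℝ) ×ˢ Set.Ioi (0:ℝ))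
      (fun z : ℝ × ℝ => z.1 ^ a * z.2 ^ b) := by
  refine convexOn_rpow_mul_rpow_of_forall_le fun u v hu hv => ?_
  rcases hab with ha | hab
  · exact one_add_mul_sub_one_add_mul_sub_one_le_rpow_mul_rpow_of_nonpos ha hb hu hv
  · exact one_add_mul_sub_one_add_mul_sub_one_le_rpow_mul_rpow_of_one_le_add hb hab hu hv
end

section
/- Let m ≥ 1, λ_1,...,λ_m > 0 with ∑ λ_i = 1, let M be a positive semidefinite symmetric n×n matrix, and let X_1,...,X_m, Y be symmetric n×n matrices satisfying the block inequality diag(λ_1 X_1,...,λ_m X_m) ≤ (λ_i λ_j Y)_{i,j}. Then for any positive reals r_1,...,r_m, one has ∑_i λ_i r_i² tr(M X_i) ≤ (∑_i λ_i r_i)² tr(M Y). -/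
/-!
Testing the block inequality against the vectors `(r_i v)_i` gives
`∑ λ_i r_i² vᵀ X_i v ≤ (∑ λ_i r_i)² vᵀ Y v` for every `v`. Writing `M = Bᴴ B` (e.g. `B = M^{1/2}`),
`tr (M Z) = tr (B Z Bᴴ)` is the sum of the quadratic forms of `Z` at the conjugated rows of `B`,
so the trace inequality is a sum of instances of the quadratic one.
-/

open Matrix

namespace Matrix

variable {ι κ : Type*} [Fintype ι] [Fintype κ]

section CommSemiring

variable {R : Type*} [CommSemiring R]

theorem dotProduct_fst_mul_snd (f f' : ι → R) (g g' : κ → R) :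
    (fun P : ι × κ => f P.1 * g P.2) ⬝ᵥ (fun P => f' P.1 * g' P.2) = (f ⬝ᵥ f') * (g ⬝ᵥ g') := by
  simp only [dotProduct, Fintype.sum_prod_type, Finset.sum_mul_sum, mul_mul_mul_comm]

theorem mulVec_of_mul_mul_apply (a x : ι → R) (Y : Matrix κ κ R) (v : κ → R) :
    (of fun P Q : ι × κ => a P.1 * a Q.1 * Y P.2 Q.2) *ᵥ (fun P => x P.1 * v P.2) =
      fun P => ((a ⬝ᵥ x) • a) P.1 * (Y *ᵥ v) P.2 := by
  ext P
  refine (dotProduct_fst_mul_snd (a P.1 • a) x (Y P.2) v).trans ?_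
  rw [smul_dotProduct, smul_eq_mul, Pi.smul_apply, smul_eq_mul, mul_comm (a P.1)]
  rfl

theorem dotProduct_mulVec_of_mul_mul_apply (a x : ι → R) (Y : Matrix κ κ R) (v : κ → R) :
    (fun P : ι × κ => x P.1 * v P.2) ⬝ᵥ
        (of fun P Q : ι × κ => a P.1 * a Q.1 * Y P.2 Q.2) *ᵥ (fun P => x P.1 * v P.2) =
      (a ⬝ᵥ x) ^ 2 * (v ⬝ᵥ Y *ᵥ v) := by
  rw [mulVec_of_mul_mul_apply, dotProduct_fst_mul_snd, dotProduct_smul, smul_eq_mul,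
    dotProduct_comm x, sq, mul_assoc]

theorem mulVec_of_ite_fst_eq [DecidableEq ι] (B : ι → Matrix κ κ R) (x : ι → R) (v : κ → R) :
    (of fun P Q : ι × κ => if P.1 = Q.1 then B P.1 P.2 Q.2 else 0) *ᵥ (fun P => x P.1 * v P.2) =
      fun P => x P.1 * (B P.1 *ᵥ v) P.2 := by
  ext P
  simp only [mulVec, dotProduct, of_apply, Fintype.sum_prod_type, ite_mul, zero_mul,
    Finset.sum_ite_irrel, Finset.sum_const_zero, Finset.sum_ite_eq, Finset.mem_univ, if_true,
    Finset.mul_sum]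
  exact Finset.sum_congr rfl fun q _ => by ring

theorem dotProduct_mulVec_of_ite_fst_eq [DecidableEq ι] (B : ι → Matrix κ κ R) (x : ι → R)
    (v : κ → R) :
    (fun P : ι × κ => x P.1 * v P.2) ⬝ᵥ
        (of fun P Q : ι × κ => if P.1 = Q.1 then B P.1 P.2 Q.2 else 0) *ᵥ (fun P => x P.1 * v P.2) =
      ∑ i, x i ^ 2 * (v ⬝ᵥ B i *ᵥ v) := by
  rw [mulVec_of_ite_fst_eq, dotProduct, Fintype.sum_prod_type]
  refine Finset.sum_congr rfl fun i _ => ?_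
  rw [dotProduct, Finset.mul_sum]
  exact Finset.sum_congr rfl fun p _ => by ring

end CommSemiring

theorem sum_mul_sq_dotProduct_mulVec_le_of_posSemidef {R : Type*} [CommRing R] [PartialOrder R]
    [IsOrderedRing R] [StarRing R] [TrivialStar R] [DecidableEq ι]
    {lam : ι → R} {X : ι → Matrix κ κ R} {Y : Matrix κ κ R}
    (hblock : (of (fun P Q : ι × κ => lam P.1 * lam Q.1 * Y P.2 Q.2) -
       of (fun P Q : ι × κ => if P.1 = Q.1 then lam P.1 * X P.1 P.2 Q.2 else 0)).PosSemidef)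
    (r : ι → R) (v : κ → R) :
    ∑ i, lam i * r i ^ 2 * (v ⬝ᵥ X i *ᵥ v) ≤ (∑ i, lam i * r i) ^ 2 * (v ⬝ᵥ Y *ᵥ v) := by
  have hdiag := dotProduct_mulVec_of_ite_fst_eq (fun i => lam i • X i) r v
  simp only [smul_apply, smul_eq_mul, smul_mulVec, dotProduct_smul] at hdiag
  have h := hblock.dotProduct_mulVec_nonneg (fun P => r P.1 * v P.2)
  rw [star_trivial, sub_mulVec, dotProduct_sub, dotProduct_mulVec_of_mul_mul_apply, hdiag,
    sub_nonneg] at h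
  calc ∑ i, lam i * r i ^ 2 * (v ⬝ᵥ X i *ᵥ v)
      = ∑ i, r i ^ 2 * (lam i * (v ⬝ᵥ X i *ᵥ v)) := Finset.sum_congr rfl fun i _ => by ring
    _ ≤ (∑ i, lam i * r i) ^ 2 * (v ⬝ᵥ Y *ᵥ v) := h

section Trace

open scoped ComplexOrder

variable {𝕜 n : Type*} [RCLike 𝕜] [Fintype n]

open scoped MatrixOrder in
theorem PosSemidef.trace_mul_nonneg_of_dotProduct_mulVec_nonneg {M Z : Matrix n n 𝕜}
    (hM : M.PosSemidef) (hZ : ∀ x, 0 ≤ star x ⬝ᵥ Z *ᵥ x) : 0 ≤ (M * Z).trace := by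
  classical
  obtain ⟨B, rfl⟩ := CStarAlgebra.nonneg_iff_eq_star_mul_self.mp hM.nonneg
  rw [Matrix.mul_assoc, trace_mul_comm]
  refine Fintype.sum_nonneg fun k => (hZ (star fun j => B k j)).trans_eq ?_
  rw [star_star, dotProduct_mulVec, diag_apply, mul_apply']
  rfl

theorem PosSemidef.trace_mul_le_trace_mul_of_dotProduct_mulVec_le {M A B : Matrix n n 𝕜}
    (hM : M.PosSemidef) (hAB : ∀ x, star x ⬝ᵥ A *ᵥ x ≤ star x ⬝ᵥ B *ᵥ x) :
    (M * A).trace ≤ (M * B).trace := by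
  rw [← sub_nonneg, ← trace_sub, ← Matrix.mul_sub]
  refine hM.trace_mul_nonneg_of_dotProduct_mulVec_nonneg fun x => ?_
  rw [sub_mulVec, dotProduct_sub, sub_nonneg]
  exact hAB x

end Trace

end Matrix

open Finset in
theorem block_loewner_trace_general (m n : ℕ) (lam : Fin m → ℝ)
    (M : Matrix (Fin n) (Fin n) ℝ) (hM : M.PosSemidef)
    (X : Fin m → Matrix (Fin n) (Fin n) ℝ) (Y : Matrix (Fin n) (Fin n) ℝ)
    (hblock :
      (Matrix.of (fun P Q : Fin m × Fin n => lam P.1 * lam Q.1 * Y P.2 Q.2) -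
       Matrix.of (fun P Q : Fin m × Fin n =>
          if P.1 = Q.1 then lam P.1 * X P.1 P.2 Q.2 else 0)).PosSemidef)
    (r : Fin m → ℝ) :
    ∑ i, lam i * r i ^ 2 * (M * X i).trace ≤
      (∑ i, lam i * r i) ^ 2 * (M * Y).trace := by
  have hquad (v : Fin n → ℝ) :
      star v ⬝ᵥ (∑ i, (lam i * r i ^ 2) • X i) *ᵥ v ≤
        star v ⬝ᵥ ((∑ i, lam i * r i) ^ 2 • Y) *ᵥ v := by
    simpa [sum_mulVec, smul_mulVec, dotProduct_sum, dotProduct_smul, mul_assoc] using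
      sum_mul_sq_dotProduct_mulVec_le_of_posSemidef hblock r v
  simpa [Matrix.mul_sum, trace_sum, trace_smul, mul_assoc] using
    hM.trace_mul_le_trace_mul_of_dotProduct_mulVec_le hquad

open Finset in
theorem block_loewner_trace (m n : ℕ) (hm : 1 ≤ m) (lam : Fin m → ℝ)
    (hlam : ∀ i, 0 < lam i) (hsum : ∑ i, lam i = 1)
    (M : Matrix (Fin n) (Fin n) ℝ) (hM : M.PosSemidef)
    (X : Fin m → Matrix (Fin n) (Fin n) ℝ) (Y : Matrix (Fin n) (Fin n) ℝ)
    (hX : ∀ i, (X i).IsHermitian) (hY : Y.IsHermitian)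
    (hblock :
      (Matrix.of (fun P Q : Fin m × Fin n => lam P.1 * lam Q.1 * Y P.2 Q.2) -
       Matrix.of (fun P Q : Fin m × Fin n =>
          if P.1 = Q.1 then lam P.1 * X P.1 P.2 Q.2 else 0)).PosSemidef)
    (r : Fin m → ℝ) (hr : ∀ i, 0 < r i) :
    ∑ i, lam i * r i ^ 2 * (M * X i).trace ≤
      (∑ i, lam i * r i) ^ 2 * (M * Y).trace :=
  block_loewner_trace_general m n lam M hM X Y hblock r
end

section
/- Let H : (0,∞) × Sⁿ → ℝ be defined by H(r,X) = −(1/p) r² tr(X) with p ∈ (0,1). If λ ∈ Λ_m, r_1,...,r_m > 0, and X_1,...,X_m, Y ∈ Sⁿ satisfy diag(λ_1 X_1,...,λ_m X_m) ≤ (λ_i λ_j Y)_{i,j} in the Loewner order on mn×mn symmetric matrices, then ∑_i λ_i H(r_i, X_i) ≥ H(∑_i λ_i r_i, Y). -/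
/-!
Testing the block inequality against the vectors `r ⊗ e_k` gives, for every `k`,
`∑ i, λ_i r_i² (X_i)_{kk} ≤ (∑ i, λ_i r_i)² Y_{kk}`; summing over `k` compares the traces, and
multiplying by `-1/p < 0` reverses the inequality.
-/

open Finset

theorem Matrix.PosSemidef.sum_star_mul_apply_mul_nonneg {ι κ R : Type*} [Fintype ι] [Fintype κ]
    [DecidableEq κ] [Ring R] [PartialOrder R] [StarRing R]
    {M : Matrix (ι × κ) (ι × κ) R} (hM : M.PosSemidef) (v : ι → R) (k : κ) :
    0 ≤ ∑ i, ∑ j, star (v i) * M (i, k) (j, k) * v j := by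
  have h := hM.dotProduct_mulVec_nonneg fun P => if P.2 = k then v P.1 else 0
  simpa [dotProduct, Matrix.mulVec, Fintype.sum_prod_type, mul_sum, mul_assoc,
    apply_ite star] using h

theorem sum_sum_mul_outer_sub_diagonal_mul {ι R : Type*} [Fintype ι] [DecidableEq ι] [CommRing R]
    (lam r x : ι → R) (y : R) :
    ∑ i, ∑ j, r i * (lam i * lam j * y - if i = j then lam i * x i else 0) * r j =
      (∑ i, lam i * r i) ^ 2 * y - ∑ i, lam i * r i ^ 2 * x i := by
  simp only [mul_sub, sub_mul, sum_sub_distrib, mul_ite, ite_mul, mul_zero, zero_mul,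
    sum_ite_eq, mem_univ, if_true]
  rw [sq, sum_mul_sum, sum_mul]
  congr 1
  · refine sum_congr rfl fun i _ => ?_
    rw [sum_mul]
    exact sum_congr rfl fun j _ => by ring
  · exact sum_congr rfl fun i _ => by ring

theorem sum_mul_sq_mul_trace_le_of_posSemidef {ι κ : Type*} [Fintype ι] [DecidableEq ι]
    [Fintype κ] [DecidableEq κ] (lam r : ι → ℝ) (X : ι → Matrix κ κ ℝ) (Y : Matrix κ κ ℝ)
    (h : (Matrix.of (fun P Q : ι × κ => lam P.1 * lam Q.1 * Y P.2 Q.2) -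
       Matrix.of (fun P Q : ι × κ =>
          if P.1 = Q.1 then lam P.1 * X P.1 P.2 Q.2 else 0)).PosSemidef) :
    ∑ i, lam i * r i ^ 2 * (X i).trace ≤ (∑ i, lam i * r i) ^ 2 * Y.trace := by
  have hk (k : κ) : 0 ≤ (∑ i, lam i * r i) ^ 2 * Y k k - ∑ i, lam i * r i ^ 2 * X i k k := by
    simpa only [star_trivial, Matrix.sub_apply, Matrix.of_apply,
      sum_sum_mul_outer_sub_diagonal_mul] using h.sum_star_mul_apply_mul_nonneg r k
  calc ∑ i, lam i * r i ^ 2 * (X i).trace = ∑ k, ∑ i, lam i * r i ^ 2 * X i k k := by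
        simp only [Matrix.trace, Matrix.diag, mul_sum]
        exact sum_comm
    _ ≤ ∑ k, (∑ i, lam i * r i) ^ 2 * Y k k := sum_le_sum fun k _ => sub_nonneg.mp (hk k)
    _ = (∑ i, lam i * r i) ^ 2 * Y.trace := by simp only [Matrix.trace, Matrix.diag, mul_sum]

open Finset in
theorem key_structural_inequality_laplacian_general (m n : ℕ) (p : ℝ)
    (hp : p ∈ Set.Ioo (0:ℝ) 1) (lam : Fin m → ℝ)
    (r : Fin m → ℝ)
    (X : Fin m → Matrix (Fin n) (Fin n) ℝ) (Y : Matrix (Fin n) (Fin n) ℝ)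
    (hblock :
      (Matrix.of (fun P Q : Fin m × Fin n => lam P.1 * lam Q.1 * Y P.2 Q.2) -
       Matrix.of (fun P Q : Fin m × Fin n =>
          if P.1 = Q.1 then lam P.1 * X P.1 P.2 Q.2 else 0)).PosSemidef) :
    -(1/p) * (∑ i, lam i * r i) ^ 2 * Y.trace ≤
      ∑ i, lam i * (-(1/p) * r i ^ 2 * (X i).trace) := by
  have htrace := sum_mul_sq_mul_trace_le_of_posSemidef lam r X Y hblock
  calc -(1/p) * (∑ i, lam i * r i) ^ 2 * Y.trace
      ≤ -(1/p) * ∑ i, lam i * r i ^ 2 * (X i).trace := by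
        rw [mul_assoc]
        exact mul_le_mul_of_nonpos_left htrace (by simpa using hp.1.le)
    _ = ∑ i, lam i * (-(1/p) * r i ^ 2 * (X i).trace) := by
        rw [mul_sum]
        exact sum_congr rfl fun i _ => by ring

open Finset in
theorem key_structural_inequality_laplacian (m n : ℕ) (p : ℝ)
    (hp : p ∈ Set.Ioo (0:ℝ) 1) (lam : Fin m → ℝ)
    (hlam : ∀ i, lam i ∈ Set.Ioo (0:ℝ) 1) (hsum : ∑ i, lam i = 1)
    (r : Fin m → ℝ) (hr : ∀ i, 0 < r i)
    (X : Fin m → Matrix (Fin n) (Fin n) ℝ) (Y : Matrix (Fin n) (Fin n) ℝ)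
    (hX : ∀ i, (X i).IsHermitian) (hY : Y.IsHermitian)
    (hblock :
      (Matrix.of (fun P Q : Fin m × Fin n => lam P.1 * lam Q.1 * Y P.2 Q.2) -
       Matrix.of (fun P Q : Fin m × Fin n =>
          if P.1 = Q.1 then lam P.1 * X P.1 P.2 Q.2 else 0)).PosSemidef) :
    -(1/p) * (∑ i, lam i * r i) ^ 2 * Y.trace ≤
      ∑ i, lam i * (-(1/p) * r i ^ 2 * (X i).trace) :=
  key_structural_inequality_laplacian_general m n p hp lam r X Y hblock
end
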